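/- arXiv:2604.05176 — 2 statements merged into one kernel-verified Lean document; each statement's English description precedes it below -/
import Mathlib

section
/- Let ε ∈ (0,1) and N ≥ exp(exp(1.842/ε)). Then the number of positive integers n ≤ N with τ(n) ≥ (log N)^{log(2)(1−ε)} is at least N·(1 − 85.165/(ε²·log log N)). -/
/-!
Since `τ(n) ≥ 2^ω(n)`, it suffices to show that `ω(n) ≥ (1 - ε) log log N` for all but few
`n ≤ N`. With `S = ∑_{p ≤ N} 1/p`, the Turán–Kubilius inequality bounds the variance
`∑_{n ≤ N} (S - ω(n))²` by `3NS`, and comparing the harmonic sum with the Euler product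
`∏_{p ≤ N} (1 - 1/p)⁻¹` gives the Mertens-type bound `S ≥ log log N - 1`. Chebyshev's inequality
then bounds the exceptional set by `3N (log log N - 1) / (ε log log N - 1)²`, which is at most
`85.165 N / (ε² log log N)` once `ε log log N ≥ 1.842`.
-/

open scoped Classical

open Finset Real

theorem Nat.two_pow_card_primeFactors_le_card_divisors {n : ℕ} (hn : n ≠ 0) :
    2 ^ #n.primeFactors ≤ #n.divisors := by
  rw [Nat.card_divisors hn]
  refine pow_card_le_prod _ _ _ fun p hp => ?_
  have := (Nat.prime_of_mem_primeFactors hp).factorization_pos_of_dvd hn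
    (Nat.dvd_of_mem_primeFactors hp)
  omega

theorem geom_sum_div_pow_le_inv_one_sub_inv {x : ℝ} (hx : 1 < x) (v : ℕ) :
    (∑ i ∈ range (v + 1), x ^ i) / x ^ v ≤ (1 - x⁻¹)⁻¹ := by
  have hx0 : 0 < x := by linarith
  have hgeom : (∑ i ∈ range (v + 1), x ^ i) * (x - 1) = x ^ (v + 1) - 1 := geom_sum_mul x _
  have hinv : (1 - x⁻¹)⁻¹ = x / (x - 1) := by field_simp
  rw [hinv, div_le_iff₀ (by positivity), div_mul_eq_mul_div, le_div_iff₀ (by linarith), hgeom,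
    ← pow_succ']
  linarith

theorem Nat.sum_inv_divisors_le_prod_primeFactors (m : ℕ) :
    ∑ d ∈ m.divisors, (d : ℝ)⁻¹ ≤ ∏ p ∈ m.primeFactors, (1 - (p : ℝ)⁻¹)⁻¹ := by
  rcases eq_or_ne m 0 with rfl | hm
  · simp
  have hσ : ∑ d ∈ m.divisors, (d : ℝ) = m * ∑ d ∈ m.divisors, (d : ℝ)⁻¹ := by
    rw [← Nat.sum_div_divisors, mul_sum]
    refine sum_congr rfl fun d hd => ?_
    have hd0 : (d : ℝ) ≠ 0 := by exact_mod_cast (Nat.pos_of_mem_divisors hd).ne'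
    rw [Nat.cast_div (Nat.dvd_of_mem_divisors hd) hd0, div_eq_mul_inv]
  have hprod : (m : ℝ) = ∏ p ∈ m.primeFactors, (p : ℝ) ^ m.factorization p := by
    conv_lhs => rw [← Nat.prod_factorization_pow_eq_self hm]
    rw [Finsupp.prod]; push_cast; rfl
  have hsigma : ∑ d ∈ m.divisors, (d : ℝ) =
      ∏ p ∈ m.primeFactors, ∑ i ∈ range (m.factorization p + 1), (p : ℝ) ^ i := by
    have h := congrArg (Nat.cast : ℕ → ℝ)
      (ArithmeticFunction.sigma_eq_prod_primeFactors_sum_range_factorization_pow_mul (k := 1) hm)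
    simp only [ArithmeticFunction.sigma_apply, pow_one, mul_one] at h
    push_cast at h
    exact h
  have hm0 : (0 : ℝ) < m := by exact_mod_cast Nat.pos_of_ne_zero hm
  calc ∑ d ∈ m.divisors, (d : ℝ)⁻¹ = (∑ d ∈ m.divisors, (d : ℝ)) / m := by
        rw [hσ, mul_div_cancel_left₀ _ hm0.ne']
    _ = ∏ p ∈ m.primeFactors,
          (∑ i ∈ range (m.factorization p + 1), (p : ℝ) ^ i) / (p : ℝ) ^ m.factorization p := by
        rw [hsigma, hprod, prod_div_distrib]
    _ ≤ _ := prod_le_prod (fun p _ => by positivity) fun p hp =>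
        geom_sum_div_pow_le_inv_one_sub_inv
          (by exact_mod_cast (Nat.prime_of_mem_primeFactors hp).one_lt) _

theorem Nat.primeFactors_factorial (N : ℕ) : N.factorial.primeFactors = Nat.primesLE N := by
  ext p
  simp only [Nat.mem_primeFactors, Nat.mem_primesLE, ne_eq, Nat.factorial_ne_zero,
    not_false_eq_true, and_true]
  exact ⟨fun ⟨hp, h⟩ => ⟨hp.dvd_factorial.1 h, hp⟩, fun ⟨h, hp⟩ => ⟨hp, hp.dvd_factorial.2 h⟩⟩

theorem sum_Icc_inv_le_prod_primesLE (N : ℕ) :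
    ∑ n ∈ Icc 1 N, (n : ℝ)⁻¹ ≤ ∏ p ∈ Nat.primesLE N, (1 - (p : ℝ)⁻¹)⁻¹ := by
  rw [← Nat.primeFactors_factorial]
  refine le_trans (sum_le_sum_of_subset_of_nonneg ?_ fun _ _ _ => by positivity)
    (Nat.sum_inv_divisors_le_prod_primeFactors _)
  intro n hn
  rw [mem_Icc] at hn
  exact Nat.mem_divisors.2 ⟨Nat.dvd_factorial hn.1 hn.2, Nat.factorial_ne_zero N⟩

theorem sum_Ico_inv_sub_one_sub_inv_le_one (n : ℕ) :
    ∑ k ∈ Ico 2 n, (((k : ℝ) - 1)⁻¹ - (k : ℝ)⁻¹) ≤ 1 := by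
  rw [sum_Ico_eq_sum_range]
  have hterm : ∀ i ∈ range (n - 2), (((2 + i : ℕ) : ℝ) - 1)⁻¹ - ((2 + i : ℕ) : ℝ)⁻¹ =
      ((i : ℝ) + 1)⁻¹ - (((i + 1 : ℕ) : ℝ) + 1)⁻¹ := fun i _ => by push_cast; ring_nf
  rw [sum_congr rfl hterm, sum_range_sub']
  simp only [Nat.cast_zero, zero_add, inv_one, sub_le_self_iff]
  positivity

theorem log_log_le_sum_primesLE_inv_add_one {N : ℕ} (hN : 1 < N) :
    log (log N) ≤ ∑ p ∈ Nat.primesLE N, (p : ℝ)⁻¹ + 1 := by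
  have hlogN : 0 < log N := log_pos (by exact_mod_cast hN)
  have hharm : log N ≤ ∑ n ∈ Icc 1 N, (n : ℝ)⁻¹ := by
    have h := (log_le_log (x := (N : ℝ)) (by positivity) (by simp)).trans
      (log_add_one_le_harmonic N)
    simpa [harmonic_eq_sum_Icc] using h
  have hp1 : ∀ p ∈ Nat.primesLE N, (1 : ℝ) < p := fun p hp => by
    exact_mod_cast Nat.one_lt_of_mem_primesLE hp
  have hpos : ∀ p ∈ Nat.primesLE N, 0 < 1 + ((p : ℝ) - 1)⁻¹ := fun p hp => by
    have := inv_pos.2 (sub_pos.2 (hp1 p hp))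
    positivity
  have hfactor : ∀ p ∈ Nat.primesLE N, (1 - (p : ℝ)⁻¹)⁻¹ = 1 + ((p : ℝ) - 1)⁻¹ := fun p hp => by
    have : (p : ℝ) - 1 ≠ 0 := (sub_pos.2 (hp1 p hp)).ne'
    have : (p : ℝ) ≠ 0 := (zero_lt_one.trans (hp1 p hp)).ne'
    field_simp
    ring
  have hsub : Nat.primesLE N ⊆ Ico 2 (N + 1) := fun p hp =>
    mem_Ico.2 ⟨Nat.two_le_of_mem_primesLE hp, Nat.lt_succ_of_le (Nat.le_of_mem_primesLE hp)⟩
  have htelescope : ∑ p ∈ Nat.primesLE N, (((p : ℝ) - 1)⁻¹ - (p : ℝ)⁻¹) ≤ 1 := by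
    refine (sum_le_sum_of_subset_of_nonneg hsub fun k hk _ => ?_).trans
      (sum_Ico_inv_sub_one_sub_inv_le_one (N + 1))
    have hk : (2 : ℝ) ≤ k := by exact_mod_cast (mem_Ico.1 hk).1
    exact sub_nonneg.2 (inv_anti₀ (by linarith) (by linarith))
  calc log (log N) ≤ log (∏ p ∈ Nat.primesLE N, (1 - (p : ℝ)⁻¹)⁻¹) :=
        log_le_log hlogN (hharm.trans (sum_Icc_inv_le_prod_primesLE N))
    _ = ∑ p ∈ Nat.primesLE N, log (1 + ((p : ℝ) - 1)⁻¹) := by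
        rw [prod_congr rfl hfactor, log_prod fun p hp => (hpos p hp).ne']
    _ ≤ ∑ p ∈ Nat.primesLE N, ((p : ℝ) - 1)⁻¹ := sum_le_sum fun p hp => by
        linarith [log_le_sub_one_of_pos (hpos p hp)]
    _ ≤ ∑ p ∈ Nat.primesLE N, (p : ℝ)⁻¹ + 1 := by
        rw [sum_sub_distrib] at htelescope
        linarith

theorem sum_card_filter_dvd_Icc {ι : Type*} (D : Finset ι) (f : ι → ℕ) (N : ℕ) :
    ∑ n ∈ Icc 1 N, #{x ∈ D | f x ∣ n} = ∑ x ∈ D, N / f x := by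
  simp only [card_filter]
  rw [sum_comm]
  refine sum_congr rfl fun x _ => ?_
  rw [← card_filter]
  exact Nat.Ioc_filter_dvd_card_eq_div N (f x)

theorem Nat.primeFactors_eq_filter_primesLE {N n : ℕ} (hn : n ∈ Icc 1 N) :
    n.primeFactors = {p ∈ Nat.primesLE N | p ∣ n} := by
  rw [mem_Icc] at hn
  ext p
  simp only [Nat.mem_primeFactors, mem_filter, Nat.mem_primesLE]
  exact ⟨fun ⟨hp, hpn, _⟩ => ⟨⟨(Nat.le_of_dvd hn.1 hpn).trans hn.2, hp⟩, hpn⟩,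
    fun ⟨⟨_, hp⟩, hpn⟩ => ⟨hp, hpn, by omega⟩⟩

theorem Nat.sq_card_primeFactors_eq_card_filter_lcm_dvd {N n : ℕ} (hn : n ∈ Icc 1 N) :
    #n.primeFactors ^ 2 =
      #{x ∈ Nat.primesLE N ×ˢ Nat.primesLE N | Nat.lcm x.1 x.2 ∣ n} := by
  rw [Nat.primeFactors_eq_filter_primesLE hn, sq, ← card_product, ← filter_product]
  simp only [Nat.lcm_dvd_iff]

theorem le_sum_card_primeFactors_Icc (N : ℕ) :
    N * ∑ p ∈ Nat.primesLE N, (p : ℝ)⁻¹ - #(Nat.primesLE N) ≤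
      ∑ n ∈ Icc 1 N, (#n.primeFactors : ℝ) := by
  have hcount : ∑ n ∈ Icc 1 N, #n.primeFactors = ∑ p ∈ Nat.primesLE N, N / p := by
    refine (sum_congr rfl fun n hn => ?_).trans (sum_card_filter_dvd_Icc _ id N)
    rw [Nat.primeFactors_eq_filter_primesLE hn]
    rfl
  rw [← Nat.cast_sum, hcount, Nat.cast_sum, mul_sum, card_eq_sum_ones, Nat.cast_sum,
    ← sum_sub_distrib]
  refine sum_le_sum fun p _ => ?_
  rw [← Nat.floor_div_eq_div (K := ℝ), Nat.cast_one, ← div_eq_mul_inv]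
  exact (Nat.sub_one_lt_floor _).le

theorem sum_sq_card_primeFactors_Icc_le (N : ℕ) :
    ∑ n ∈ Icc 1 N, (#n.primeFactors : ℝ) ^ 2 ≤
      N * ∑ p ∈ Nat.primesLE N, (p : ℝ)⁻¹ + N * (∑ p ∈ Nat.primesLE N, (p : ℝ)⁻¹) ^ 2 := by
  set P := Nat.primesLE N
  have hcount : ∑ n ∈ Icc 1 N, #n.primeFactors ^ 2 = ∑ x ∈ P ×ˢ P, N / Nat.lcm x.1 x.2 := by
    rw [← sum_card_filter_dvd_Icc]
    exact sum_congr rfl fun n hn => Nat.sq_card_primeFactors_eq_card_filter_lcm_dvd hn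
  have hpair : ∀ x ∈ P ×ˢ P, ((N / Nat.lcm x.1 x.2 : ℕ) : ℝ) ≤
      (if x.1 = x.2 then N * (x.1 : ℝ)⁻¹ else 0) + N * ((x.1 : ℝ)⁻¹ * (x.2 : ℝ)⁻¹) := by
    rintro ⟨p, q⟩ hpq
    obtain ⟨hp, hq⟩ := mem_product.1 hpq
    dsimp only at hp hq ⊢
    refine Nat.cast_div_le.trans ?_
    split_ifs with h
    · subst h
      rw [Nat.lcm_self, div_eq_mul_inv, le_add_iff_nonneg_right]
      positivity
    · rw [((Nat.coprime_primes (Nat.prime_of_mem_primesLE hp)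
        (Nat.prime_of_mem_primesLE hq)).2 h).lcm_eq_mul, zero_add]
      push_cast
      rw [div_eq_mul_inv, mul_inv]
  calc ∑ n ∈ Icc 1 N, (#n.primeFactors : ℝ) ^ 2
      = ∑ x ∈ P ×ˢ P, ((N / Nat.lcm x.1 x.2 : ℕ) : ℝ) := by exact_mod_cast hcount
    _ ≤ ∑ x ∈ P ×ˢ P, ((if x.1 = x.2 then N * (x.1 : ℝ)⁻¹ else 0) +
          N * ((x.1 : ℝ)⁻¹ * (x.2 : ℝ)⁻¹)) := sum_le_sum hpair
    _ = _ := by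
      rw [sum_add_distrib, sum_product, sum_product, sq, sum_mul_sum, mul_sum, mul_sum]
      congr 1
      · simp [sum_ite_eq]
      · simp_rw [mul_sum]

theorem Nat.card_primesLE_le (N : ℕ) : #(Nat.primesLE N) ≤ N := by
  refine (card_le_card fun p hp => ?_).trans (Nat.card_Icc 1 N).le
  exact mem_Icc.2 ⟨(Nat.one_lt_of_mem_primesLE hp).le, Nat.le_of_mem_primesLE hp⟩

theorem sum_sq_sub_card_primeFactors_Icc_le (N : ℕ) :
    ∑ n ∈ Icc 1 N, (∑ p ∈ Nat.primesLE N, (p : ℝ)⁻¹ - #n.primeFactors) ^ 2 ≤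
      3 * N * ∑ p ∈ Nat.primesLE N, (p : ℝ)⁻¹ := by
  set S := ∑ p ∈ Nat.primesLE N, (p : ℝ)⁻¹
  have hS : 0 ≤ S := sum_nonneg fun p _ => by positivity
  have hP : (#(Nat.primesLE N) : ℝ) ≤ N := by exact_mod_cast Nat.card_primesLE_le N
  have hexpand : ∑ n ∈ Icc 1 N, (S - #n.primeFactors) ^ 2 =
      N * S ^ 2 - 2 * S * ∑ n ∈ Icc 1 N, (#n.primeFactors : ℝ) +
        ∑ n ∈ Icc 1 N, (#n.primeFactors : ℝ) ^ 2 := by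
    simp only [sub_sq, sum_add_distrib, sum_sub_distrib, sum_const, Nat.card_Icc, ← mul_sum,
      nsmul_eq_mul]
    push_cast
    ring
  have h1 := mul_le_mul_of_nonneg_left (le_sum_card_primeFactors_Icc N) hS
  have h2 := sum_sq_card_primeFactors_Icc_le N
  rw [hexpand]
  nlinarith

theorem card_filter_lt_mul_sq_le_sum_sq {ι : Type*} (s : Finset ι) (f : ι → ℝ) {a c : ℝ}
    (hac : a ≤ c) : #{i ∈ s | f i < a} * (c - a) ^ 2 ≤ ∑ i ∈ s, (c - f i) ^ 2 := by
  rw [← nsmul_eq_mul]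
  refine (card_nsmul_le_sum _ _ _ fun i hi => ?_).trans
    (sum_le_sum_of_subset_of_nonneg (filter_subset _ s) fun _ _ _ => sq_nonneg _)
  have := (mem_filter.1 hi).2
  exact pow_le_pow_left₀ (by linarith) (by linarith) 2

theorem card_filter_card_primeFactors_lt_mul_sq_le {N : ℕ} (hN : 1 < N) {a : ℝ} (ha : 0 ≤ a)
    (haL : a < log (log N) - 1) :
    #{n ∈ Icc 1 N | (#n.primeFactors : ℝ) < a} * (log (log N) - 1 - a) ^ 2 ≤
      3 * N * (log (log N) - 1) := by
  set M := log (log N) - 1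
  set S := ∑ p ∈ Nat.primesLE N, (p : ℝ)⁻¹
  set B : ℝ := ((#{n ∈ Icc 1 N | (#n.primeFactors : ℝ) < a} : ℕ) : ℝ)
  have hMS : M ≤ S := by linarith [log_log_le_sum_primesLE_inv_add_one hN]
  have hB : B * (S - a) ^ 2 ≤ 3 * N * S :=
    (card_filter_lt_mul_sq_le_sum_sq _ _ (by linarith)).trans
      (sum_sq_sub_card_primeFactors_Icc_le N)
  -- `S ↦ S / (S - a) ^ 2` is decreasing for `S > a ≥ 0`
  have hmono : S * (M - a) ^ 2 ≤ M * (S - a) ^ 2 := by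
    nlinarith [mul_nonneg (sub_nonneg.2 hMS) (by nlinarith : 0 ≤ S * M - a ^ 2)]
  have hSa : 0 < (S - a) ^ 2 := by nlinarith
  refine le_of_mul_le_mul_right ?_ hSa
  calc B * (M - a) ^ 2 * (S - a) ^ 2 = B * (S - a) ^ 2 * (M - a) ^ 2 := by ring
    _ ≤ 3 * N * S * (M - a) ^ 2 := by gcongr
    _ ≤ 3 * N * M * (S - a) ^ 2 := by
      rw [mul_assoc, mul_assoc _ M]
      gcongr

theorem rpow_log_two_mul_le_card_divisors {n : ℕ} (hn : n ≠ 0) {x c : ℝ} (hx : 0 < x)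
    (h : c * log x ≤ #n.primeFactors) : x ^ (log 2 * c) ≤ #n.divisors :=
  calc x ^ (log 2 * c) = 2 ^ (c * log x) := by
        rw [rpow_def_of_pos hx, rpow_def_of_pos two_pos]
        ring_nf
    _ ≤ 2 ^ (#n.primeFactors : ℝ) := rpow_le_rpow_of_exponent_le one_le_two h
    _ = ((2 ^ #n.primeFactors : ℕ) : ℝ) := by norm_cast
    _ ≤ #n.divisors := by exact_mod_cast Nat.two_pow_card_primeFactors_le_card_divisors hn

theorem card_filter_card_divisors_lt_rpow_le (N : ℕ) {x c : ℝ} (hx : 0 < x) :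
    #{n ∈ Icc 1 N | (#n.divisors : ℝ) < x ^ (log 2 * c)} ≤
      #{n ∈ Icc 1 N | (#n.primeFactors : ℝ) < c * log x} := by
  refine card_le_card fun n hn => ?_
  obtain ⟨hn, hτ⟩ := mem_filter.1 hn
  refine mem_filter.2 ⟨hn, lt_of_not_ge fun hω => hτ.not_ge ?_⟩
  exact rpow_log_two_mul_le_card_divisors (by linarith [(mem_Icc.1 hn).1]) hx hω

theorem card_filter_card_primeFactors_lt_le {N : ℕ} (hN : 1 < N) {ε : ℝ} (hε : ε ∈ Set.Ioo 0 1)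
    (hεL : 1.842 ≤ ε * log (log N)) :
    (#{n ∈ Icc 1 N | (#n.primeFactors : ℝ) < (1 - ε) * log (log N)} : ℝ) ≤
      85.165 * N / (ε ^ 2 * log (log N)) := by
  obtain ⟨hε0, hε1⟩ := hε
  set L := log (log N)
  set b : ℝ := ((#{n ∈ Icc 1 N | (#n.primeFactors : ℝ) < (1 - ε) * L} : ℕ) : ℝ)
  have hL : 0 < L := by nlinarith
  have hb : b * (ε * L - 1) ^ 2 ≤ 3 * N * (L - 1) := by
    have h := card_filter_card_primeFactors_lt_mul_sq_le hN (a := (1 - ε) * L) (by nlinarith)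
      (by nlinarith)
    rwa [show L - 1 - (1 - ε) * L = ε * L - 1 by ring] at h
  -- `1.842` exceeds the larger root of `4x² - 10x + 5`, so `x² ≤ 5 (x - 1)²` for `x = εL`
  have hεL5 : (ε * L) ^ 2 ≤ 5 * (ε * L - 1) ^ 2 := by nlinarith
  rw [le_div_iff₀ (by positivity)]
  refine le_of_mul_le_mul_right ?_ (by nlinarith : 0 < (ε * L - 1) ^ 2)
  calc b * (ε ^ 2 * L) * (ε * L - 1) ^ 2 = b * (ε * L - 1) ^ 2 * (ε ^ 2 * L) := by ring
    _ ≤ 3 * N * (L - 1) * (ε ^ 2 * L) := by gcongr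
    _ ≤ 3 * N * (ε * L) ^ 2 := by nlinarith [sq_nonneg ε]
    _ ≤ 85.165 * N * (ε * L - 1) ^ 2 := by nlinarith

/-- Effective Hardy–Ramanujan: for `ε ∈ (0,1)` and `N ≥ exp(exp(1.842/ε))`,
`#{n ≤ N : τ(n) ≥ (log N)^{log 2 · (1−ε)}} ≥ N(1 − 85.165/(ε² log log N))`. -/
theorem stmt14 (ε : ℝ) (hε : ε ∈ Set.Ioo (0 : ℝ) 1) (N : ℕ)
    (hN : Real.exp (Real.exp (1.842 / ε)) ≤ (N : ℝ)) :
    (N : ℝ) * (1 - 85.165 / (ε ^ 2 * Real.log (Real.log N))) ≤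
      (((Finset.Icc 1 N).filter
        (fun n => (Real.log N) ^ (Real.log 2 * (1 - ε)) ≤ (n.divisors.card : ℝ))).card : ℝ) := by
  have hN1 : 1 < N := by exact_mod_cast (one_lt_exp_iff.2 (exp_pos _)).trans_le hN
  have hlogN : exp (1.842 / ε) ≤ log N := (le_log_iff_exp_le (by positivity)).2 hN
  have hεL : 1.842 ≤ ε * log (log N) := by
    rw [← div_le_iff₀' hε.1]
    exact (le_log_iff_exp_le ((exp_pos _).trans_le hlogN)).2 hlogN
  have hsplit := card_filter_add_card_filter_not (s := Icc 1 N)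
    (fun n => log N ^ (log 2 * (1 - ε)) ≤ (#n.divisors : ℝ))
  simp only [not_le, Nat.card_Icc, add_tsub_cancel_right] at hsplit
  have hexc := card_filter_card_divisors_lt_rpow_le N (c := 1 - ε)
    (log_pos (Nat.one_lt_cast.2 hN1))
  have hsmall := card_filter_card_primeFactors_lt_le hN1 hε hεL
  have hcount : (N : ℝ) ≤ #{n ∈ Icc 1 N | log N ^ (log 2 * (1 - ε)) ≤ (#n.divisors : ℝ)} +
      #{n ∈ Icc 1 N | (#n.primeFactors : ℝ) < (1 - ε) * log (log N)} := by
    exact_mod_cast hsplit ▸ Nat.add_le_add_left hexc _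
  calc (N : ℝ) * (1 - 85.165 / (ε ^ 2 * log (log N)))
      = N - 85.165 * N / (ε ^ 2 * log (log N)) := by ring
    _ ≤ _ := by linarith
end

section
/- For any fixed ρ ∈ (0,1), the expected size of the largest strongly connected component of the randomly oriented divisor graph D_ρ(N) is asymptotic to N, i.e., E[#Φ(D_ρ(N))]/N → 1 as N → ∞. -/
open scoped Classical

noncomputable section

/-- The edge set of the divisor graph `G_N`: pairs `(a, b)` with `1 ≤ a < b ≤ N`
and `a ∣ b`; each undirected edge is recorded once. -/
def divEdges (N : ℕ) : Finset (ℕ × ℕ) :=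
  (Finset.Icc 1 N ×ˢ Finset.Icc 1 N).filter (fun p => p.1 < p.2 ∧ p.1 ∣ p.2)

/-- An orientation of `G_N` is a function on the edge set; `f e = true` means the
edge `e = (a, b)` (with `a < b`) is reversed, i.e. directed from the smaller `a`
to the larger `b` (the default orientation of `D_N` points from larger to smaller). -/
def dAdj (N : ℕ) (f : {e // e ∈ divEdges N} → Bool) (x y : ℕ) : Prop :=
  (∃ h : (y, x) ∈ divEdges N, f ⟨(y, x), h⟩ = false) ∨
  (∃ h : (x, y) ∈ divEdges N, f ⟨(x, y), h⟩ = true)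

/-- The size of the strongly connected component of `v` in the orientation `f`. -/
def sccSize (N : ℕ) (f : {e // e ∈ divEdges N} → Bool) (v : ℕ) : ℕ :=
  ((Finset.Icc 1 N).filter (fun w =>
    Relation.ReflTransGen (dAdj N f) v w ∧ Relation.ReflTransGen (dAdj N f) w v)).card

/-- The size of the largest strongly connected component of the orientation `f`. -/
def largestSCC (N : ℕ) (f : {e // e ∈ divEdges N} → Bool) : ℕ :=
  (Finset.Icc 1 N).sup (sccSize N f)

/-- The probability of the orientation `f` when each edge is independently
reversed with probability `ρ`. -/
def orientProb (N : ℕ) (ρ : ℝ) (f : {e // e ∈ divEdges N} → Bool) : ℝ :=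
  ∏ e : {e // e ∈ divEdges N}, if f e then ρ else 1 - ρ

/-- `E[#Φ(𝒟_ρ(N))]`: the expected size of the largest strongly connected
component of the randomly oriented divisor graph. -/
def expLargestSCC (N : ℕ) (ρ : ℝ) : ℝ :=
  ∑ f : {e // e ∈ divEdges N} → Bool, orientProb N ρ f * (largestSCC N f : ℝ)

end

/-!
The component of the vertex `1` is already almost everything. For a nontrivial divisor `d` of
`v`, the path `1 → d → v` is present with probability `ρ²` and `v → d → 1` with probability
`(1 - ρ)²`, independently over `d` because these paths share no edge. So `v` fails to be
strongly connected to `1` with probability at most `(1 - ρ²)^τ + (1 - (1 - ρ)²)^τ`, where `τ` is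
the number of nontrivial divisors of `v`. It remains to see that `∑_{v ≤ N} r^τ(v) = o(N)` for
`r < 1`, i.e. that the integers with boundedly many divisors have density zero. This follows
from the divergence of `∑ 1/p`, which makes the density `φ(P)/P` of the integers coprime to a
suitable product `P` of large primes arbitrarily small.
-/

namespace BernoulliProduct

variable {ι : Type*} [Fintype ι]

def weight (ρ : ℝ) (f : ι → Bool) : ℝ := ∏ i, if f i then ρ else 1 - ρ

lemma weight_nonneg {ρ : ℝ} (h₀ : 0 ≤ ρ) (h₁ : ρ ≤ 1) (f : ι → Bool) : 0 ≤ weight ρ f :=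
  Finset.prod_nonneg fun i _ => by split_ifs <;> linarith

-- Not left to `Classical`: sums over `ι → Bool` must use the same `Fintype` instance as
-- `orientProb` once `ι` is instantiated with the edge set.
variable [DecidableEq ι]

lemma sum_weight_cylinder (ρ : ℝ) (S : Finset ι) (σ : ι → Bool) :
    ∑ f : ι → Bool, (if ∀ i ∈ S, f i = σ i then weight ρ f else 0)
      = ∏ i ∈ S, if σ i then ρ else 1 - ρ := by
  let g : ι → Bool → ℝ := fun i b => if i ∈ S ∧ b ≠ σ i then 0 else if b then ρ else 1 - ρ
  have hterm : ∀ f : ι → Bool,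
      (if ∀ i ∈ S, f i = σ i then weight ρ f else 0) = ∏ i, g i (f i) := by
    intro f
    by_cases hf : ∀ i ∈ S, f i = σ i
    · rw [if_pos hf, weight]
      refine Finset.prod_congr rfl fun i _ => ?_
      simp only [g, if_neg fun h : i ∈ S ∧ f i ≠ σ i => h.2 (hf i h.1)]
    · push Not at hf
      obtain ⟨i, hi, hne⟩ := hf
      rw [if_neg (by simpa using ⟨i, hi, hne⟩), eq_comm]
      exact Finset.prod_eq_zero (Finset.mem_univ i) (if_pos ⟨hi, hne⟩)
  have hfactor : ∀ i, ∑ b, g i b = if i ∈ S then (if σ i then ρ else 1 - ρ) else 1 := by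
    intro i
    by_cases hi : i ∈ S <;> cases hσ : σ i <;> simp [g, hi, hσ]
  simp_rw [hterm, ← Fintype.prod_sum, hfactor, Finset.prod_ite_mem, Finset.univ_inter]

lemma sum_weight (ρ : ℝ) : ∑ f : ι → Bool, weight ρ f = 1 := by
  simpa using sum_weight_cylinder ρ (∅ : Finset ι) (fun _ => true)

lemma sum_weight_mul_prod_one_sub_cylinder (ρ : ℝ) {α : Type*} (U : Finset α)
    (S : α → Finset ι) (σ : ι → Bool) (hdisj : (U : Set α).PairwiseDisjoint S) :
    ∑ f : ι → Bool, weight ρ f * ∏ m ∈ U, (1 - if ∀ i ∈ S m, f i = σ i then 1 else 0)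
      = ∏ m ∈ U, (1 - ∏ i ∈ S m, if σ i then ρ else 1 - ρ) := by
  have hexpand : ∀ g : α → ℝ,
      ∏ m ∈ U, (1 - g m) = ∑ t ∈ U.powerset, (-1) ^ t.card * ∏ m ∈ t, g m := fun g => by
    simp [Finset.prod_sub]
  have hcyl : ∀ (f : ι → Bool) (t : Finset α),
      weight ρ f * ∏ m ∈ t, (if ∀ i ∈ S m, f i = σ i then 1 else 0)
        = if ∀ i ∈ t.biUnion S, f i = σ i then weight ρ f else 0 := by
    intro f t
    have hiff : (∀ m ∈ t, ∀ i ∈ S m, f i = σ i) ↔ ∀ i ∈ t.biUnion S, f i = σ i := by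
      simp only [Finset.mem_biUnion, forall_exists_index, and_imp]
      exact ⟨fun h i m hm hi => h m hm i hi, fun h m hm i hi => h i m hm hi⟩
    rw [Finset.prod_boole, mul_ite, mul_one, mul_zero]
    exact if_congr hiff rfl rfl
  calc ∑ f : ι → Bool, weight ρ f * ∏ m ∈ U, (1 - if ∀ i ∈ S m, f i = σ i then 1 else 0)
      = ∑ t ∈ U.powerset, (-1) ^ t.card *
          ∑ f : ι → Bool, if ∀ i ∈ t.biUnion S, f i = σ i then weight ρ f else 0 := by
        simp_rw [hexpand, Finset.mul_sum, ← hcyl]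
        rw [Finset.sum_comm]
        exact Finset.sum_congr rfl fun t _ => Finset.sum_congr rfl fun f _ => by ring
    _ = ∑ t ∈ U.powerset, (-1) ^ t.card * ∏ m ∈ t, ∏ i ∈ S m, if σ i then ρ else 1 - ρ := by
        refine Finset.sum_congr rfl fun t ht => ?_
        rw [sum_weight_cylinder, Finset.prod_biUnion (hdisj.subset (by simpa using ht))]
    _ = _ := (hexpand _).symm

/-- The right-hand side is the probability that `f` matches `σ` on none of the disjoint
blocks `S m`. -/
lemma sum_weight_not_le {ρ : ℝ} (h₀ : 0 ≤ ρ) (h₁ : ρ ≤ 1) {α : Type*} (U : Finset α)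
    (S : α → Finset ι) (σ : ι → Bool) (hdisj : (U : Set α).PairwiseDisjoint S)
    (E : (ι → Bool) → Prop) (hE : ∀ f, ∀ m ∈ U, (∀ i ∈ S m, f i = σ i) → E f) :
    ∑ f : ι → Bool, (if E f then 0 else weight ρ f)
      ≤ ∏ m ∈ U, (1 - ∏ i ∈ S m, if σ i then ρ else 1 - ρ) := by
  rw [← sum_weight_mul_prod_one_sub_cylinder ρ U S σ hdisj]
  refine Finset.sum_le_sum fun f _ => ?_
  by_cases hEf : E f
  · rw [if_pos hEf]
    exact mul_nonneg (weight_nonneg h₀ h₁ f)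
      (Finset.prod_nonneg fun m _ => by split_ifs <;> norm_num)
  · have hnone : ∀ m ∈ U, (1 - if ∀ i ∈ S m, f i = σ i then (1 : ℝ) else 0) = 1 :=
      fun m hm => by rw [if_neg fun h => hEf (hE f m hm h), sub_zero]
    rw [if_neg hEf, Finset.prod_eq_one hnone, mul_one]

end BernoulliProduct

def nontrivialDivisors (v : ℕ) : Finset ℕ := (Finset.Ioo 1 v).filter (· ∣ v)

def pathBlock (N v d : ℕ) : Finset {e // e ∈ divEdges N} :=
  Finset.univ.filter fun e => e.1 = (1, d) ∨ e.1 = (d, v)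

lemma mem_divEdges {N a b : ℕ} (ha : 1 ≤ a) (hab : a < b) (hbN : b ≤ N) (hdvd : a ∣ b) :
    (a, b) ∈ divEdges N := by
  simp only [divEdges, Finset.mem_filter, Finset.mem_product, Finset.mem_Icc]
  exact ⟨⟨⟨ha, by omega⟩, by omega, hbN⟩, hab, hdvd⟩

section PathBlock

variable {N v d : ℕ} (hv : v ≤ N) (hd : d ∈ nontrivialDivisors v)
include hv hd

lemma mem_divEdges_one_divisor : (1, d) ∈ divEdges N := by
  simp only [nontrivialDivisors, Finset.mem_filter, Finset.mem_Ioo] at hd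
  exact mem_divEdges le_rfl hd.1.1 (by omega) (one_dvd d)

lemma mem_divEdges_divisor_self : (d, v) ∈ divEdges N := by
  simp only [nontrivialDivisors, Finset.mem_filter, Finset.mem_Ioo] at hd
  exact mem_divEdges (by omega) hd.1.2 hv hd.2

lemma pathBlock_eq : pathBlock N v d
    = {⟨(1, d), mem_divEdges_one_divisor hv hd⟩, ⟨(d, v), mem_divEdges_divisor_self hv hd⟩} := by
  ext e
  simp [pathBlock, Subtype.ext_iff]

lemma card_pathBlock : (pathBlock N v d).card = 2 := by
  have hd1 : 1 < d := (Finset.mem_Ioo.mp (Finset.mem_filter.mp hd).1).1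
  rw [pathBlock_eq hv hd, Finset.card_pair]
  simp only [ne_eq, Subtype.mk.injEq, Prod.mk.injEq]
  omega

lemma reflTransGen_one_of_pathBlock {f : {e // e ∈ divEdges N} → Bool}
    (hf : ∀ e ∈ pathBlock N v d, f e = true) : Relation.ReflTransGen (dAdj N f) 1 v := by
  rw [pathBlock_eq hv hd] at hf
  have h1d : dAdj N f 1 d := Or.inr ⟨mem_divEdges_one_divisor hv hd, hf _ (by simp)⟩
  have hdv : dAdj N f d v := Or.inr ⟨mem_divEdges_divisor_self hv hd, hf _ (by simp)⟩
  exact .head h1d (.single hdv)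

lemma reflTransGen_to_one_of_pathBlock {f : {e // e ∈ divEdges N} → Bool}
    (hf : ∀ e ∈ pathBlock N v d, f e = false) : Relation.ReflTransGen (dAdj N f) v 1 := by
  rw [pathBlock_eq hv hd] at hf
  have hvd : dAdj N f v d := Or.inl ⟨mem_divEdges_divisor_self hv hd, hf _ (by simp)⟩
  have hd1 : dAdj N f d 1 := Or.inl ⟨mem_divEdges_one_divisor hv hd, hf _ (by simp)⟩
  exact .head hvd (.single hd1)

end PathBlock

lemma pathBlock_pairwiseDisjoint (N v : ℕ) :
    (nontrivialDivisors v : Set ℕ).PairwiseDisjoint (pathBlock N v) := by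
  intro d hd d' hd' hne
  simp only [nontrivialDivisors, Finset.coe_filter, Finset.mem_Ioo, Set.mem_ofPred_eq] at hd hd'
  rw [Function.onFun, Finset.disjoint_left]
  intro e he he'
  simp only [pathBlock, Finset.mem_filter, Finset.mem_univ, true_and] at he he'
  rcases he with h | h <;> rcases he' with h' | h' <;> rw [h] at h' <;>
    simp only [Prod.mk.injEq] at h' <;> omega

open BernoulliProduct in
/-- Each nontrivial divisor `d` of `v` gives a path `1 — d — v`; these paths share no edge, hence
are oriented independently. `b = true` orients a path from `1` to `v`, `b = false` from `v`
to `1`. -/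
lemma sum_orientProb_not_le {ρ : ℝ} (hρ : ρ ∈ Set.Ioo (0 : ℝ) 1) {N v : ℕ} (hv : v ≤ N)
    (b : Bool) (E : ({e // e ∈ divEdges N} → Bool) → Prop)
    (hE : ∀ f, ∀ d ∈ nontrivialDivisors v, (∀ e ∈ pathBlock N v d, f e = b) → E f) :
    ∑ f, (if E f then 0 else orientProb N ρ f)
      ≤ (1 - (if b then ρ else 1 - ρ) ^ 2) ^ (nontrivialDivisors v).card := by
  have h := sum_weight_not_le hρ.1.le hρ.2.le (nontrivialDivisors v) (pathBlock N v) (fun _ => b)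
    (pathBlock_pairwiseDisjoint N v) E hE
  rw [Finset.prod_congr rfl fun d hd => by rw [Finset.prod_const, card_pathBlock hv hd],
    Finset.prod_const] at h
  exact h

lemma orientProb_nonneg {ρ : ℝ} (hρ : ρ ∈ Set.Ioo (0 : ℝ) 1) (N : ℕ)
    (f : {e // e ∈ divEdges N} → Bool) : 0 ≤ orientProb N ρ f :=
  BernoulliProduct.weight_nonneg hρ.1.le hρ.2.le f

lemma sum_orientProb (N : ℕ) (ρ : ℝ) : ∑ f, orientProb N ρ f = 1 :=
  BernoulliProduct.sum_weight (ι := {e // e ∈ divEdges N}) ρ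

lemma largestSCC_le (N : ℕ) (f : {e // e ∈ divEdges N} → Bool) : largestSCC N f ≤ N :=
  Finset.sup_le fun _ _ => (Finset.card_filter_le _ _).trans (by simp)

lemma expLargestSCC_le {ρ : ℝ} (hρ : ρ ∈ Set.Ioo (0 : ℝ) 1) (N : ℕ) :
    expLargestSCC N ρ ≤ N :=
  calc expLargestSCC N ρ ≤ ∑ f, orientProb N ρ f * N :=
        Finset.sum_le_sum fun f _ => mul_le_mul_of_nonneg_left
          (by exact_mod_cast largestSCC_le N f) (orientProb_nonneg hρ N f)
    _ = N := by rw [← Finset.sum_mul, sum_orientProb, one_mul]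

/-- The component of the vertex `1` alone already has expected size at least this. -/
lemma sub_sum_le_expLargestSCC {ρ : ℝ} (hρ : ρ ∈ Set.Ioo (0 : ℝ) 1) {N : ℕ} (hN : 1 ≤ N) :
    N - ∑ v ∈ Finset.Icc 1 N, ((1 - ρ ^ 2) ^ (nontrivialDivisors v).card
        + (1 - (1 - ρ) ^ 2) ^ (nontrivialDivisors v).card)
      ≤ expLargestSCC N ρ := by
  set A : ({e // e ∈ divEdges N} → Bool) → ℕ → Prop :=
    fun f v => Relation.ReflTransGen (dAdj N f) 1 v
  set B : ({e // e ∈ divEdges N} → Bool) → ℕ → Prop :=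
    fun f v => Relation.ReflTransGen (dAdj N f) v 1
  have hA : ∀ v ∈ Finset.Icc 1 N, ∑ f, (if A f v then 0 else orientProb N ρ f)
      ≤ (1 - ρ ^ 2) ^ (nontrivialDivisors v).card := fun v hv =>
    sum_orientProb_not_le hρ (Finset.mem_Icc.mp hv).2 true (A · v)
      fun _ _ hd => reflTransGen_one_of_pathBlock (Finset.mem_Icc.mp hv).2 hd
  have hB : ∀ v ∈ Finset.Icc 1 N, ∑ f, (if B f v then 0 else orientProb N ρ f)
      ≤ (1 - (1 - ρ) ^ 2) ^ (nontrivialDivisors v).card := fun v hv =>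
    sum_orientProb_not_le hρ (Finset.mem_Icc.mp hv).2 false (B · v)
      fun _ _ hd => reflTransGen_to_one_of_pathBlock (Finset.mem_Icc.mp hv).2 hd
  have hpoint : ∀ f v, orientProb N ρ f - (if A f v then 0 else orientProb N ρ f)
      - (if B f v then 0 else orientProb N ρ f)
      ≤ orientProb N ρ f * if A f v ∧ B f v then 1 else 0 := fun f v => by
    have := orientProb_nonneg hρ N f
    split_ifs <;> simp_all
  have hscc : ∀ f, (sccSize N f 1 : ℝ) = ∑ v ∈ Finset.Icc 1 N, if A f v ∧ B f v then 1 else 0 :=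
    fun f => by rw [sccSize, Finset.card_filter]; push_cast; rfl
  calc (N : ℝ) - ∑ v ∈ Finset.Icc 1 N, ((1 - ρ ^ 2) ^ (nontrivialDivisors v).card
        + (1 - (1 - ρ) ^ 2) ^ (nontrivialDivisors v).card)
      = ∑ v ∈ Finset.Icc 1 N, (1 - ((1 - ρ ^ 2) ^ (nontrivialDivisors v).card
        + (1 - (1 - ρ) ^ 2) ^ (nontrivialDivisors v).card)) := by simp [Finset.sum_sub_distrib]
    _ ≤ ∑ v ∈ Finset.Icc 1 N, ∑ f, (orientProb N ρ f - (if A f v then 0 else orientProb N ρ f)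
          - (if B f v then 0 else orientProb N ρ f)) := by
        refine Finset.sum_le_sum fun v hv => ?_
        rw [Finset.sum_sub_distrib, Finset.sum_sub_distrib, sum_orientProb]
        linarith [hA v hv, hB v hv]
    _ ≤ ∑ f, orientProb N ρ f * sccSize N f 1 := by
        simp_rw [hscc, Finset.mul_sum]
        rw [Finset.sum_comm]
        exact Finset.sum_le_sum fun f _ => Finset.sum_le_sum fun v _ => hpoint f v
    _ ≤ expLargestSCC N ρ := Finset.sum_le_sum fun f _ => mul_le_mul_of_nonneg_left
          (by exact_mod_cast Finset.le_sup (f := sccSize N f) (by simp [hN]))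
          (orientProb_nonneg hρ N f)

open Filter Topology

lemma exists_primes_gt_le_sum_inv (Q : ℕ) (c : ℝ) :
    ∃ G : Finset ℕ, (∀ p ∈ G, p.Prime ∧ Q < p) ∧ c ≤ ∑ p ∈ G, (p : ℝ)⁻¹ := by
  set g := Set.indicator {p : ℕ | p.Prime} fun n : ℕ => (1 : ℝ) / n
  have hg : ∀ n, 0 ≤ g n := Set.indicator_nonneg fun n _ => by positivity
  have htend := (not_summable_iff_tendsto_nat_atTop_of_nonneg hg).mp
    not_summable_one_div_on_primes
  obtain ⟨M, hM⟩ := (htend.eventually_ge_atTop (c + ∑ n ∈ Finset.range (Q + 1), g n)).exists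
  refine ⟨((Finset.range M).filter (Q < ·)).filter Nat.Prime,
    fun p hp => ⟨(Finset.mem_filter.mp hp).2, (Finset.mem_filter.mp (Finset.mem_filter.mp hp).1).2⟩,
    ?_⟩
  have hsmall : ∑ n ∈ (Finset.range M).filter (¬ Q < ·), g n ≤ ∑ n ∈ Finset.range (Q + 1), g n :=
    Finset.sum_le_sum_of_subset_of_nonneg
      (fun n hn => Finset.mem_range.mpr (by simp at hn; omega)) fun n _ _ => hg n
  have hlarge : ∑ n ∈ (Finset.range M).filter (Q < ·), g n
      = ∑ p ∈ ((Finset.range M).filter (Q < ·)).filter Nat.Prime, (p : ℝ)⁻¹ := by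
    symm
    rw [Finset.sum_filter]
    exact Finset.sum_congr rfl fun n _ => by simp [g, Set.indicator_apply]
  linarith [Finset.sum_filter_add_sum_filter_not (Finset.range M) (Q < ·) g]

/-- Euler's product `φ(P)/P = ∏_{p ∣ P} (1 - 1/p)` can be made small using primes beyond `Q`,
because `∑ 1/p` diverges. -/
lemma exists_coprime_totient_le {Q : ℕ} (hQ : 0 < Q) {δ : ℝ} (hδ : 0 < δ) :
    ∃ P : ℕ, 0 < P ∧ P.Coprime Q ∧ (P.totient : ℝ) ≤ δ * P := by
  obtain ⟨G, hG, hsum⟩ := exists_primes_gt_le_sum_inv Q (-Real.log δ)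
  refine ⟨∏ p ∈ G, p, Finset.prod_pos fun p hp => (hG p hp).1.pos,
    Nat.Coprime.prod_left fun p hp => ((hG p hp).1.coprime_iff_not_dvd).mpr
      fun hdvd => (hG p hp).2.not_ge (Nat.le_of_dvd hQ hdvd), ?_⟩
  have heuler : ((∏ p ∈ G, p).totient : ℝ) = (∏ p ∈ G, p : ℕ) * ∏ p ∈ G, (1 - (p : ℝ)⁻¹) := by
    have h := congrArg (Rat.cast : ℚ → ℝ) (Nat.totient_eq_mul_prod_factors (∏ p ∈ G, p))
    rw [Nat.primeFactors_prod fun p hp => (hG p hp).1] at h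
    push_cast at h ⊢
    exact h
  have hprod : ∏ p ∈ G, (1 - (p : ℝ)⁻¹) ≤ δ :=
    calc ∏ p ∈ G, (1 - (p : ℝ)⁻¹) ≤ ∏ p ∈ G, Real.exp (-(p : ℝ)⁻¹) :=
          Finset.prod_le_prod
            (fun p hp => sub_nonneg.mpr
              (inv_le_one_of_one_le₀ (by exact_mod_cast (hG p hp).1.one_le)))
            fun p _ => by linarith [Real.add_one_le_exp (-(p : ℝ)⁻¹)]
      _ = Real.exp (-∑ p ∈ G, (p : ℝ)⁻¹) := by rw [← Real.exp_sum, Finset.sum_neg_distrib]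
      _ ≤ Real.exp (Real.log δ) := Real.exp_le_exp.mpr (by linarith)
      _ = δ := Real.exp_log hδ
  rw [heuler, mul_comm]
  exact mul_le_mul_of_nonneg_right hprod (by positivity)

lemma exists_pairwise_coprime_totient_le (k : ℕ) {δ : ℝ} (hδ : 0 < δ) :
    ∃ P : Fin k → ℕ, Pairwise (fun i j => (P i).Coprime (P j)) ∧
      ∀ i, 0 < P i ∧ ((P i).totient : ℝ) ≤ δ * P i := by
  induction k with
  | zero => exact ⟨Fin.elim0, fun i => i.elim0, fun i => i.elim0⟩
  | succ k ih =>
    obtain ⟨P, hcop, hP⟩ := ih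
    obtain ⟨P₀, hP₀, hP₀cop, hP₀φ⟩ :=
      exists_coprime_totient_le (Finset.prod_pos fun i _ => (hP i).1) hδ
    have hnew : ∀ i, P₀.Coprime (P i) := fun i =>
      hP₀cop.coprime_dvd_right (Finset.dvd_prod_of_mem P (Finset.mem_univ i))
    refine ⟨Fin.cons P₀ P, fun i j hij => ?_, fun i => Fin.cases ⟨hP₀, hP₀φ⟩ hP i⟩
    cases i using Fin.cases <;> cases j using Fin.cases
    · exact absurd rfl hij
    · exact hnew _
    · exact (hnew _).symm
    · exact hcop (fun h => hij (congrArg Fin.succ h))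

lemma card_filter_coprime_le {P : ℕ} (hP : 0 < P) {δ : ℝ} (hφ : (P.totient : ℝ) ≤ δ * P)
    (N : ℕ) : (((Finset.Icc 1 N).filter P.Coprime).card : ℝ) ≤ δ * (N + 1) + P := by
  have hcount : ((Finset.Icc 1 N).filter P.Coprime).card ≤ P.totient * ((N + 1) / P + 1) :=
    calc _ ≤ ((Finset.Ico 0 (0 + (N + 1))).filter P.Coprime).card :=
          Finset.card_le_card (Finset.filter_subset_filter _ fun v hv => by simp at hv ⊢; omega)
      _ ≤ _ := Nat.Ico_filter_coprime_le 0 (N + 1) hP.ne'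
  have hPR : (0 : ℝ) < P := by exact_mod_cast hP
  calc (((Finset.Icc 1 N).filter P.Coprime).card : ℝ)
      ≤ P.totient * (((N + 1) / P : ℕ) : ℝ) + P.totient := by
        exact_mod_cast hcount.trans_eq (by ring)
    _ ≤ δ * P * ((N + 1) / P) + P :=
        add_le_add (mul_le_mul hφ (by exact_mod_cast Nat.cast_div_le) (by positivity)
          ((Nat.cast_nonneg _).trans hφ)) (by exact_mod_cast Nat.totient_le P)
    _ = δ * (N + 1) + P := by field_simp

lemma two_pow_card_primeFactors_le_card_divisors {v : ℕ} (hv : v ≠ 0) :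
    2 ^ v.primeFactors.card ≤ v.divisors.card := by
  rw [Nat.card_divisors hv]
  refine Finset.pow_card_le_prod _ _ _ fun p hp => ?_
  have : v.factorization p ≠ 0 := Finsupp.mem_support_iff.mp (by rwa [Nat.support_factorization])
  omega

lemma card_divisors_le_card_nontrivialDivisors_add_two (v : ℕ) :
    v.divisors.card ≤ (nontrivialDivisors v).card + 2 := by
  have hsub : v.divisors ⊆ insert 1 (insert v (nontrivialDivisors v)) := by
    intro d hd
    obtain ⟨hdv, hv⟩ := Nat.mem_divisors.mp hd
    have hd0 : d ≠ 0 := by rintro rfl; exact hv (Nat.eq_zero_of_zero_dvd hdv)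
    have hle : d ≤ v := Nat.le_of_dvd (Nat.pos_of_ne_zero hv) hdv
    simp only [Finset.mem_insert, nontrivialDivisors, Finset.mem_filter, Finset.mem_Ioo]
    omega
  calc v.divisors.card ≤ (insert 1 (insert v (nontrivialDivisors v))).card :=
        Finset.card_le_card hsub
    _ ≤ (nontrivialDivisors v).card + 2 :=
        (Finset.card_insert_le _ _).trans (Nat.succ_le_succ (Finset.card_insert_le _ _))

lemma le_card_primeFactors {k : ℕ} {P : Fin k → ℕ} (hP : Pairwise fun i j => (P i).Coprime (P j))
    {v : ℕ} (hv : v ≠ 0) (hPv : ∀ i, ¬ (P i).Coprime v) : k ≤ v.primeFactors.card := by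
  have hprime : ∀ i, ∃ p, p.Prime ∧ p ∣ Nat.gcd (P i) v := fun i => Nat.exists_prime_and_dvd (hPv i)
  choose p hp hpdvd using hprime
  have hinj : Function.Injective p := fun i j hij => by
    by_contra hne
    exact (hp i).one_lt.ne' (Nat.eq_one_of_dvd_coprimes (hP hne)
      ((hpdvd i).trans (Nat.gcd_dvd_left _ _)) (hij ▸ (hpdvd j).trans (Nat.gcd_dvd_left _ _)))
  simpa using Finset.card_le_card_of_injOn (s := Finset.univ) p
    (fun i _ => Nat.mem_primeFactors.mpr ⟨hp i, (hpdvd i).trans (Nat.gcd_dvd_right _ _), hv⟩)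
    hinj.injOn

lemma exists_coprime_of_card_nontrivialDivisors_add_two_lt {k : ℕ} {P : Fin k → ℕ}
    (hP : Pairwise fun i j => (P i).Coprime (P j)) {v : ℕ} (hv : v ≠ 0)
    (hvk : (nontrivialDivisors v).card + 2 < 2 ^ k) : ∃ i, (P i).Coprime v := by
  by_contra! h
  have hk := le_card_primeFactors hP hv h
  have := (Nat.pow_le_pow_right two_pos hk).trans
    ((two_pow_card_primeFactors_le_card_divisors hv).trans
      (card_divisors_le_card_nontrivialDivisors_add_two v))
  omega

/-- Take pairwise coprime `P i` with `φ(P i) / P i` small: outside the `k` sets of integers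
coprime to some `P i`, every integer has at least `2 ^ k - 2` nontrivial divisors. -/
lemma tendsto_card_filter_nontrivialDivisors_lt_div (t : ℕ) :
    Tendsto (fun N : ℕ => ((Finset.Icc 1 N).filter
      (fun v => (nontrivialDivisors v).card < t)).card / (N : ℝ)) atTop (𝓝 0) := by
  refine tendsto_order.mpr ⟨fun a ha => .of_forall fun N => ha.trans_le (by positivity),
    fun ε hε => ?_⟩
  set k := t + 2
  set δ := ε / (k + 1)
  have hδ : 0 < δ := by positivity
  have hkδ : k * δ < ε := by
    rw [show (k : ℝ) * δ = k / (k + 1) * ε by ring]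
    exact mul_lt_of_lt_one_left hε ((div_lt_one (by positivity)).mpr (lt_add_one _))
  obtain ⟨P, hcop, hP⟩ := exists_pairwise_coprime_totient_le k hδ
  set C : ℝ := ∑ i, (P i : ℝ)
  have hfew : ∀ N, (((Finset.Icc 1 N).filter
      (fun v => (nontrivialDivisors v).card < t)).card : ℝ) ≤ k * δ * (N + 1) + C := by
    intro N
    have hsub : (Finset.Icc 1 N).filter (fun v => (nontrivialDivisors v).card < t)
        ⊆ Finset.univ.biUnion fun i => (Finset.Icc 1 N).filter (P i).Coprime := by
      intro v hv
      obtain ⟨hvN, hvt⟩ := Finset.mem_filter.mp hv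
      have hv0 : v ≠ 0 := by simp at hvN; omega
      obtain ⟨i, hi⟩ := exists_coprime_of_card_nontrivialDivisors_add_two_lt hcop hv0
        (by have := Nat.lt_two_pow_self (n := k); omega)
      exact Finset.mem_biUnion.mpr ⟨i, Finset.mem_univ i, Finset.mem_filter.mpr ⟨hvN, hi⟩⟩
    calc _ ≤ (∑ i, ((Finset.Icc 1 N).filter (P i).Coprime).card : ℝ) := by
          exact_mod_cast (Finset.card_le_card hsub).trans Finset.card_biUnion_le
      _ ≤ ∑ i : Fin k, (δ * (N + 1) + P i) :=
          Finset.sum_le_sum fun i _ => card_filter_coprime_le (hP i).1 (hP i).2 N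
      _ = k * δ * (N + 1) + C := by simp [Finset.sum_add_distrib, C]; ring
  have hlim : Tendsto (fun N : ℕ => k * δ + (k * δ + C) / N) atTop (𝓝 (k * δ)) := by
    simpa using tendsto_const_nhds.add (tendsto_const_div_atTop_nhds_zero_nat (k * δ + C))
  filter_upwards [hlim.eventually_lt_const hkδ, eventually_ge_atTop 1] with N hN hN1
  refine lt_of_le_of_lt ?_ hN
  rw [div_le_iff₀ (by exact_mod_cast hN1), add_mul, div_mul_cancel₀ _ (by positivity)]
  linarith [hfew N]

lemma tendsto_sum_pow_div_of_density {a : ℕ → ℕ}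
    (ha : ∀ t, Tendsto (fun N : ℕ => ((Finset.Icc 1 N).filter (a · < t)).card / (N : ℝ))
      atTop (𝓝 0))
    {r : ℝ} (hr₀ : 0 ≤ r) (hr₁ : r < 1) :
    Tendsto (fun N : ℕ => (∑ v ∈ Finset.Icc 1 N, r ^ a v) / N) atTop (𝓝 0) := by
  refine tendsto_order.mpr ⟨fun b hb => .of_forall fun N => hb.trans_le (by positivity),
    fun ε hε => ?_⟩
  obtain ⟨t, ht⟩ := exists_pow_lt_of_lt_one hε hr₁
  have hbound : ∀ N : ℕ, ∑ v ∈ Finset.Icc 1 N, r ^ a v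
      ≤ ((Finset.Icc 1 N).filter (a · < t)).card + N * r ^ t := by
    intro N
    have hterm : ∀ v, r ^ a v ≤ (if a v < t then 1 else 0) + r ^ t := fun v => by
      split_ifs with h
      · linarith [pow_le_one₀ hr₀ hr₁.le (n := a v), pow_nonneg hr₀ t]
      · simpa using pow_le_pow_of_le_one hr₀ hr₁.le (not_lt.mp h)
    calc _ ≤ ∑ v ∈ Finset.Icc 1 N, ((if a v < t then 1 else 0) + r ^ t) :=
          Finset.sum_le_sum fun v _ => hterm v
      _ = _ := by simp [Finset.sum_add_distrib, Finset.sum_boole]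
  filter_upwards [((ha t).add_const (r ^ t)).eventually_lt_const (by simpa using ht),
    eventually_ge_atTop 1] with N hN hN1
  refine lt_of_le_of_lt ?_ hN
  rw [div_le_iff₀ (by exact_mod_cast hN1), add_mul, div_mul_cancel₀ _ (by positivity)]
  linarith [hbound N]

/-- For fixed `ρ ∈ (0,1)`, `E[#Φ(𝒟_ρ(N))]/N → 1` as `N → ∞`. -/
theorem stmt15 (ρ : ℝ) (hρ : ρ ∈ Set.Ioo (0 : ℝ) 1) :
    Filter.Tendsto (fun N : ℕ => expLargestSCC N ρ / N) Filter.atTop (nhds 1) := by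
  have hsum : ∀ r : ℝ, 0 ≤ r → r < 1 → Tendsto (fun N : ℕ =>
      (∑ v ∈ Finset.Icc 1 N, r ^ (nontrivialDivisors v).card) / N) atTop (𝓝 0) :=
    fun r hr₀ hr₁ => tendsto_sum_pow_div_of_density
      tendsto_card_filter_nontrivialDivisors_lt_div hr₀ hr₁
  have hlower := ((hsum (1 - ρ ^ 2) (by nlinarith [hρ.1, hρ.2]) (by nlinarith [hρ.1, hρ.2])).add
    (hsum (1 - (1 - ρ) ^ 2) (by nlinarith [hρ.1, hρ.2]) (by nlinarith [hρ.1, hρ.2]))).const_sub 1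
  rw [add_zero, sub_zero] at hlower
  refine tendsto_of_tendsto_of_tendsto_of_le_of_le' hlower tendsto_const_nhds ?_ ?_
  · filter_upwards [eventually_ge_atTop 1] with N hN
    rw [← add_div, ← Finset.sum_add_distrib, one_sub_div (by positivity)]
    exact div_le_div_of_nonneg_right (sub_sum_le_expLargestSCC hρ hN) (by positivity)
  · filter_upwards [eventually_ge_atTop 1] with N hN
    exact (div_le_one (by positivity)).mpr (expLargestSCC_le hρ N)
end
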